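/- Among all K! SIC decoding orders, the identity order (1, ..., K) — corresponding to increasing normalized rates R_n/τ_n — uniquely minimizes S_σ = (2^{R_{σ(1)}}-1)/(2^{R_{σ(1)}/τ_{σ(1)}}-1) + ∑_{l=2}^K (2^{R_{σ(l)}}-1)/(2^{R_{σ(l)}/τ_{σ(l)}}-1) ∏_{k=1}^{l-1} 2^{R_{σ(k)}}, assuming R_1/τ_1 < R_2/τ_2 < ... < R_K/τ_K with all R_n, τ_n > 0. -/

import Mathlib

/-- Total power allocation coefficient sum required for NOMA to match OMA outage
performance per-user, under SIC decoding order `σ` (acting on user indices `1,…,K`). -/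
noncomputable def Stot (K : ℕ) (R τ : ℕ → ℝ) (σ : ℕ → ℕ) : ℝ :=
  ((2 : ℝ) ^ (R (σ 1)) - 1) / ((2 : ℝ) ^ (R (σ 1) / τ (σ 1)) - 1) +
    ∑ l ∈ Finset.Icc 2 K,
      (((2 : ℝ) ^ (R (σ l)) - 1) / ((2 : ℝ) ^ (R (σ l) / τ (σ l)) - 1)) *
        ∏ k ∈ Finset.Icc 1 (l - 1), (2 : ℝ) ^ (R (σ k))

/-!
Write the cost of a decoding order `a₁, …, a_K` in Horner form
`f a₁ + g a₁ * (f a₂ + g a₂ * (⋯))`, with `f` the NOMA coefficient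
`(2^R - 1) / (2^(R/τ) - 1)` and `g = 2^R`. Swapping two adjacent users `b < a` that stand in the
order `a, b` changes only their two terms, and with `A = 2^{R_b} - 1`, `B = 2^{R_a} - 1`,
`U = 2^{R_b/τ_b} - 1 < V = 2^{R_a/τ_a} - 1` it lowers the cost by `AB/U - AB/V > 0`.
Every step of insertion sort is such a swap, so the sorted order, i.e. the identity, is the
unique minimizer.
-/

open Finset

section SequencingCost

variable {α : Type*} (f g : α → ℝ)

def seqCost : List α → ℝ
  | [] => 0
  | a :: l => f a + g a * seqCost l

variable {f g}

theorem seqCost_cons_lt_cons {a : α} {l l' : List α} (ha : 0 < g a)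
    (h : seqCost f g l < seqCost f g l') : seqCost f g (a :: l) < seqCost f g (a :: l') := by
  simp only [seqCost]
  gcongr

theorem seqCost_swap_lt {a b : α} (m : List α) (h : f b + g b * f a < f a + g a * f b) :
    seqCost f g (b :: a :: m) < seqCost f g (a :: b :: m) := by
  simp only [seqCost]
  linear_combination h

theorem seqCost_map_range' (σ : ℕ → α) (a n : ℕ) :
    seqCost f g ((List.range' a n).map σ) =
      ∑ l ∈ Ico a (a + n), f (σ l) * ∏ k ∈ Ico a l, g (σ k) := by
  induction n generalizing a with
  | zero => simp [seqCost]
  | succ n ih =>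
    rw [List.range'_succ, List.map_cons, seqCost, ih,
      sum_eq_sum_Ico_succ_bot (show a < a + (n + 1) by omega), Ico_self, prod_empty, mul_one,
      mul_sum, show a + 1 + n = a + (n + 1) by omega]
    congr 1
    refine sum_congr rfl fun l hl => ?_
    rw [prod_eq_prod_Ico_succ_bot (a := a) (mem_Ico.mp hl).1]
    ring

variable [LinearOrder α] {s : Set α}

theorem orderedInsert_eq_or_seqCost_lt (hg : ∀ x ∈ s, 0 < g x)
    (hswap : ∀ a ∈ s, ∀ b ∈ s, b < a → f b + g b * f a < f a + g a * f b)
    {a : α} (ha : a ∈ s) {m : List α} (hm : ∀ x ∈ m, x ∈ s) :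
    m.orderedInsert (· ≤ ·) a = a :: m ∨
      seqCost f g (m.orderedInsert (· ≤ ·) a) < seqCost f g (a :: m) := by
  induction m with
  | nil => exact .inl rfl
  | cons b m ih =>
    by_cases hab : a ≤ b
    · exact .inl (List.orderedInsert_cons_of_le _ _ hab)
    · right
      have hb : b ∈ s := hm b List.mem_cons_self
      rw [List.orderedInsert_of_not_le _ _ hab]
      calc seqCost f g (b :: m.orderedInsert (· ≤ ·) a)
          ≤ seqCost f g (b :: a :: m) := by
            rcases ih (fun x hx => hm x (List.mem_cons_of_mem b hx)) with h | h
            · rw [h]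
            · exact (seqCost_cons_lt_cons (hg b hb) h).le
        _ < seqCost f g (a :: b :: m) :=
            seqCost_swap_lt m (hswap a ha b hb (not_le.mp hab))

theorem insertionSort_eq_or_seqCost_lt (hg : ∀ x ∈ s, 0 < g x)
    (hswap : ∀ a ∈ s, ∀ b ∈ s, b < a → f b + g b * f a < f a + g a * f b)
    {l : List α} (hl : ∀ x ∈ l, x ∈ s) :
    l.insertionSort (· ≤ ·) = l ∨ seqCost f g (l.insertionSort (· ≤ ·)) < seqCost f g l := by
  induction l with
  | nil => exact .inl rfl
  | cons a l ih =>
    have ha : a ∈ s := hl a List.mem_cons_self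
    have hsorted_mem : ∀ x ∈ l.insertionSort (· ≤ ·), x ∈ s := fun x hx =>
      hl x (List.mem_cons_of_mem a ((List.mem_insertionSort _).mp hx))
    rw [List.insertionSort_cons]
    rcases ih (fun x hx => hl x (List.mem_cons_of_mem a hx)) with h | h
    · rw [h] at hsorted_mem ⊢
      exact orderedInsert_eq_or_seqCost_lt hg hswap ha hsorted_mem
    · right
      calc seqCost f g ((l.insertionSort (· ≤ ·)).orderedInsert (· ≤ ·) a)
          ≤ seqCost f g (a :: l.insertionSort (· ≤ ·)) := by
            rcases orderedInsert_eq_or_seqCost_lt hg hswap ha hsorted_mem with h' | h'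
            · rw [h']
            · exact h'.le
        _ < seqCost f g (a :: l) := seqCost_cons_lt_cons (hg a ha) h

theorem eq_or_seqCost_lt_of_perm_of_sortedLE (hg : ∀ x ∈ s, 0 < g x)
    (hswap : ∀ a ∈ s, ∀ b ∈ s, b < a → f b + g b * f a < f a + g a * f b)
    {l l' : List α} (hl : ∀ x ∈ l, x ∈ s) (hperm : l.Perm l') (hsorted : l'.SortedLE) :
    l = l' ∨ seqCost f g l' < seqCost f g l := by
  have hsort : l.insertionSort (· ≤ ·) = l' :=
    List.Perm.eq_of_sortedLE List.sortedLE_insertionSort hsorted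
      ((List.perm_insertionSort _ l).trans hperm)
  rw [← hsort]
  exact (insertionSort_eq_or_seqCost_lt hg hswap hl).imp_left Eq.symm

end SequencingCost

theorem List.map_perm_self_of_bijOn {α : Type*} {l : List α} {σ : α → α} (hl : l.Nodup)
    (hσ : Set.BijOn σ {x | x ∈ l} {x | x ∈ l}) : (l.map σ).Perm l := by
  refine (List.perm_ext_iff_of_nodup (hl.map_on fun x hx y hy => (hσ.injOn hx hy ·)) hl).mpr
    fun y => ⟨fun hy => ?_, fun hy => ?_⟩
  · obtain ⟨x, hx, rfl⟩ := List.mem_map.mp hy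
    exact hσ.mapsTo hx
  · obtain ⟨x, hx, rfl⟩ := hσ.surjOn hy
    exact List.mem_map_of_mem hx

noncomputable def nomaCoeff (R τ : ℕ → ℝ) (n : ℕ) : ℝ :=
  ((2 : ℝ) ^ R n - 1) / ((2 : ℝ) ^ (R n / τ n) - 1)

theorem Stot_eq_seqCost {K : ℕ} (hK : 1 ≤ K) (R τ : ℕ → ℝ) (σ : ℕ → ℕ) :
    Stot K R τ σ =
      seqCost (nomaCoeff R τ) (fun n => (2 : ℝ) ^ R n) ((List.range' 1 K).map σ) := by
  rw [seqCost_map_range', sum_eq_sum_Ico_succ_bot (by omega), Ico_self, prod_empty, mul_one,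
    show 1 + K = K + 1 by omega, Ico_add_one_right_eq_Icc, Stot]
  refine congrArg _ (sum_congr rfl fun l hl => ?_)
  rw [← Ico_add_one_right_eq_Icc, Nat.sub_add_cancel (by rw [mem_Icc] at hl; omega), nomaCoeff]

theorem nomaCoeff_exchange {R τ : ℕ → ℝ} {m n : ℕ} (hm : 0 < R m) (hn : 0 < R n)
    (hr : 0 < R m / τ m) (hmn : R m / τ m < R n / τ n) :
    nomaCoeff R τ m + (2 : ℝ) ^ R m * nomaCoeff R τ n <
      nomaCoeff R τ n + (2 : ℝ) ^ R n * nomaCoeff R τ m := by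
  have one_lt {x : ℝ} (hx : 0 < x) : 1 < (2 : ℝ) ^ x := Real.one_lt_rpow one_lt_two hx
  have hA := sub_pos.mpr (one_lt hm)
  have hB := sub_pos.mpr (one_lt hn)
  have hU := sub_pos.mpr (one_lt hr)
  have hUV := sub_lt_sub_right (Real.rpow_lt_rpow_of_exponent_lt one_lt_two hmn) 1
  have key := div_lt_div_of_pos_left (mul_pos hA hB) hU hUV
  unfold nomaCoeff
  linear_combination key

theorem stmt_11 (K : ℕ) (hK : 1 ≤ K) (R τ : ℕ → ℝ)
    (hR : ∀ n ∈ Finset.Icc 1 K, 0 < R n)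
    (hτ : ∀ n ∈ Finset.Icc 1 K, 0 < τ n)
    (hord : ∀ m ∈ Finset.Icc 1 K, ∀ n ∈ Finset.Icc 1 K, m < n → R m / τ m < R n / τ n) :
    ∀ σ : ℕ → ℕ, Set.BijOn σ ↑(Finset.Icc 1 K) ↑(Finset.Icc 1 K) →
      Stot K R τ id ≤ Stot K R τ σ ∧
        (Stot K R τ id = Stot K R τ σ ↔ ∀ n ∈ Finset.Icc 1 K, σ n = n) := by
  intro σ hσ
  have hmem : ∀ n, n ∈ List.range' 1 K ↔ n ∈ Icc 1 K := by
    simp only [List.mem_range'_1, mem_Icc]; omega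
  have hperm : ((List.range' 1 K).map σ).Perm (List.range' 1 K) :=
    List.map_perm_self_of_bijOn List.nodup_range' (by simp only [hmem]; exact hσ)
  have hfixed : (∀ n ∈ Icc 1 K, σ n = n) ↔ (List.range' 1 K).map σ = List.range' 1 K := by
    have h := List.map_inj_left (l := List.range' 1 K) (f := σ) (g := id)
    rw [List.map_id] at h
    simp only [h, hmem, id]
  rw [Stot_eq_seqCost hK, Stot_eq_seqCost hK, List.map_id, hfixed]
  rcases eq_or_seqCost_lt_of_perm_of_sortedLE (s := ↑(Icc 1 K)) (fun n _ => by positivity)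
    (fun a ha b hb hba => nomaCoeff_exchange (hR b hb) (hR a ha)
      (div_pos (hR b hb) (hτ b hb)) (hord b hb a ha hba))
    (fun n hn => (hmem n).mp (hperm.mem_iff.mp hn)) hperm (List.sortedLE_range' 1 K 1)
    with h | h
  · simp [h]
  · exact ⟨h.le, fun h' => absurd h' h.ne, fun h' => absurd (h' ▸ h) (lt_irrefl _)⟩
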